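/- arXiv:2306.08519 — 6 statements merged into one kernel-verified Lean document; each statement's English description precedes it below -/
import Mathlib

section
/- For every 1 ≤ j ≤ I−2 one has Σ_{k=j+1}^{I−2} Γ_k/(I−k) = (1/(I−j)) · Σ_{k=j+1}^{I−2} Y_k, and consequently Y_j = ((I−j+1)/(I−j)) · Γ_j + (1/(I−j)) · Σ_{k=j+1}^{I−2} Y_k. (Summations with upper index strictly less than the lower index are empty and zero-valued.) -/
/-- `Y_j = ((I−j+1)/(I−j))·Γ_j + Σ_{k=j+1}^{I−2} Γ_k/(I−k)`; empty sums are zero. -/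
noncomputable def Yalg (I : ℕ) (Γ : ℕ → ℝ) (j : ℕ) : ℝ :=
  ((I : ℝ) - (j : ℝ) + 1) / ((I : ℝ) - (j : ℝ)) * Γ j
    + ∑ k ∈ Finset.Icc (j + 1) (I - 2), Γ k / ((I : ℝ) - (k : ℝ))

/-!
Writing `a_k = Γ_k/(I−k)`, one has `Y_k = (I−k+1)·a_k + Σ_{m>k} a_m`. Summing over `k > j`,
each `a_m` is counted with weight `(I−m+1) + (m−j−1) = I−j`, so `Σ_{k>j} Y_k = (I−j)·Σ_{k>j} a_k`.
-/

open Finset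

theorem sum_Icc_eq_add_sum_Icc_succ {M : Type*} [AddCommMonoid M] (f : ℕ → M) {a b : ℕ}
    (h : a ≤ b) : ∑ k ∈ Icc a b, f k = f a + ∑ k ∈ Icc (a + 1) b, f k := by
  rw [Icc_add_one_left_eq_Ioc, add_sum_Ioc_eq_sum_Icc h]

theorem sum_Icc_linear_weight_add_tail {R : Type*} [CommRing R] (a : ℕ → R) (x : R)
    (j n : ℕ) :
    ∑ k ∈ Icc (j + 1) n, ((x - k + 1) * a k + ∑ m ∈ Icc (k + 1) n, a m)
      = (x - j) * ∑ k ∈ Icc (j + 1) n, a k := by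
  induction hd : n - j generalizing j with
  | zero => simp [Icc_eq_empty_of_lt (show n < j + 1 by omega)]
  | succ d ih =>
    have hj : j + 1 ≤ n := by omega
    rw [sum_Icc_eq_add_sum_Icc_succ _ hj, sum_Icc_eq_add_sum_Icc_succ _ hj,
      ih (j + 1) (by omega)]
    push_cast
    ring

theorem Yalg_eq (I : ℕ) (Γ : ℕ → ℝ) (k : ℕ) :
    Yalg I Γ k = ((I : ℝ) - k + 1) * (Γ k / ((I : ℝ) - k))
      + ∑ m ∈ Icc (k + 1) (I - 2), Γ m / ((I : ℝ) - m) := by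
  rw [Yalg, div_mul_eq_mul_div, mul_div_assoc]

theorem sum_Icc_Yalg (I : ℕ) (Γ : ℕ → ℝ) (j : ℕ) :
    ∑ k ∈ Icc (j + 1) (I - 2), Yalg I Γ k
      = ((I : ℝ) - j) * ∑ k ∈ Icc (j + 1) (I - 2), Γ k / ((I : ℝ) - k) := by
  simp only [Yalg_eq]
  exact sum_Icc_linear_weight_add_tail _ _ _ _

theorem stmt2_general (I : ℕ) (Γ : ℕ → ℝ) :
    ∀ j : ℕ, 1 ≤ j → j ≤ I - 2 →
      (∑ k ∈ Finset.Icc (j + 1) (I - 2), Γ k / ((I : ℝ) - (k : ℝ))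
          = 1 / ((I : ℝ) - (j : ℝ)) * ∑ k ∈ Finset.Icc (j + 1) (I - 2), Yalg I Γ k) ∧
      Yalg I Γ j
        = ((I : ℝ) - (j : ℝ) + 1) / ((I : ℝ) - (j : ℝ)) * Γ j
          + 1 / ((I : ℝ) - (j : ℝ)) * ∑ k ∈ Finset.Icc (j + 1) (I - 2), Yalg I Γ k := by
  intro j hj hjI
  have hIj : (I : ℝ) - j ≠ 0 := sub_ne_zero.mpr (by exact_mod_cast (show I ≠ j by omega))
  have htail : ∑ k ∈ Icc (j + 1) (I - 2), Γ k / ((I : ℝ) - k)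
      = 1 / ((I : ℝ) - j) * ∑ k ∈ Icc (j + 1) (I - 2), Yalg I Γ k := by
    rw [sum_Icc_Yalg, ← mul_assoc, one_div_mul_cancel hIj, one_mul]
  exact ⟨htail, by rw [Yalg, htail]⟩

/-- for `1 ≤ j ≤ I−2`,
`Σ_{k=j+1}^{I−2} Γ_k/(I−k) = (1/(I−j))·Σ_{k=j+1}^{I−2} Y_k` and consequently
`Y_j = ((I−j+1)/(I−j))·Γ_j + (1/(I−j))·Σ_{k=j+1}^{I−2} Y_k`. -/
theorem stmt2 (I : ℕ) (hI : 3 ≤ I) (Γ : ℕ → ℝ) :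
    ∀ j : ℕ, 1 ≤ j → j ≤ I - 2 →
      (∑ k ∈ Finset.Icc (j + 1) (I - 2), Γ k / ((I : ℝ) - (k : ℝ))
          = 1 / ((I : ℝ) - (j : ℝ)) * ∑ k ∈ Finset.Icc (j + 1) (I - 2), Yalg I Γ k) ∧
      Yalg I Γ j
        = ((I : ℝ) - (j : ℝ) + 1) / ((I : ℝ) - (j : ℝ)) * Γ j
          + 1 / ((I : ℝ) - (j : ℝ)) * ∑ k ∈ Finset.Icc (j + 1) (I - 2), Yalg I Γ k :=
  stmt2_general I Γ
end

section
/- Let λ > 0 and let 1 ≤ j ≤ I−3. If |Y_k| ≤ λ for all j+2 ≤ k ≤ I−2, then |Σ_{k=j+2}^{I−2} Γ_k/(I−k)| ≤ ((I−j−3)/(I−j−1)) · λ, and in particular this quantity is strictly less than λ. -/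
/-!
Write `T_m = Σ_{k=m}^{I−2} Γ_k/(I−k)` and `n = I − m`. Since `Y_m = ((n+1)/n)·Γ_m + T_{m+1}`,
the tail sum is a convex combination `T_m = Y_m/(n+1) + (n/(n+1))·T_{m+1}`. Downward induction
from the empty sum `T_{I−1} = 0` then gives `|T_m| ≤ ((n−1)/(n+1))·λ`.
-/

open Finset

namespace Yalg

variable (I : ℕ) (Γ : ℕ → ℝ)

noncomputable def tailSum (m : ℕ) : ℝ :=
  ∑ k ∈ Icc m (I - 2), Γ k / ((I : ℝ) - k)

theorem eq_mul_add_tailSum (j : ℕ) :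
    Yalg I Γ j = ((I : ℝ) - j + 1) / ((I : ℝ) - j) * Γ j + tailSum I Γ (j + 1) :=
  rfl

variable {I}

theorem tailSum_eq_add {m : ℕ} (hm : m ≤ I - 2) :
    tailSum I Γ m = Γ m / ((I : ℝ) - m) + tailSum I Γ (m + 1) := by
  rw [tailSum, tailSum, Icc_eq_cons_Ioc hm, sum_cons, Icc_add_one_left_eq_Ioc]

theorem tailSum_eq_convex_comb {m : ℕ} (hm : m + 2 ≤ I) :
    tailSum I Γ m = Yalg I Γ m / ((I : ℝ) - m + 1)
      + ((I : ℝ) - m) / ((I : ℝ) - m + 1) * tailSum I Γ (m + 1) := by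
  have hn : (2 : ℝ) ≤ (I : ℝ) - m := by
    rw [le_sub_iff_add_le, add_comm]; exact_mod_cast hm
  rw [tailSum_eq_add Γ (by omega), eq_mul_add_tailSum]
  field_simp
  ring

-- `2 ≤ I` rules out `I - 2` truncating to `0`, which would make `Icc (I - 1) (I - 2)` nonempty.
theorem abs_tailSum_le {lam : ℝ} {m : ℕ} (hI : 2 ≤ I) (hm : m + 1 ≤ I)
    (hY : ∀ k, m ≤ k → k ≤ I - 2 → |Yalg I Γ k| ≤ lam) :
    |tailSum I Γ m| ≤ ((I : ℝ) - m - 1) / ((I : ℝ) - m + 1) * lam := by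
  obtain ⟨d, hd⟩ := Nat.exists_eq_add_of_le hm
  induction d generalizing m with
  | zero =>
    have hempty : Icc m (I - 2) = ∅ := Icc_eq_empty (by omega : ¬m ≤ I - 2)
    have hIm : (I : ℝ) = m + 1 := by exact_mod_cast hd
    simp [tailSum, hempty, hIm]
  | succ d ih =>
    have hT := ih (m := m + 1) (by omega) (fun k (hk : m + 1 ≤ k) => hY k (by omega)) (by omega)
    have hYm := hY m le_rfl (by omega)
    set n : ℝ := (I : ℝ) - m with hn_def
    have hn : (2 : ℝ) ≤ n := by
      rw [hn_def, le_sub_iff_add_le, add_comm]; exact_mod_cast (show m + 2 ≤ I by omega)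
    have hT' : |tailSum I Γ (m + 1)| ≤ (n - 2) / n * lam := by
      convert hT using 3 <;> push_cast <;> ring
    rw [tailSum_eq_convex_comb Γ (by omega)]
    calc _ ≤ |Yalg I Γ m / (n + 1)| + |n / (n + 1) * tailSum I Γ (m + 1)| := abs_add_le _ _
      _ = |Yalg I Γ m| / (n + 1) + n / (n + 1) * |tailSum I Γ (m + 1)| := by
          rw [abs_div, abs_mul, abs_div, abs_of_pos (by linarith : 0 < n),
            abs_of_pos (by linarith : 0 < n + 1)]
      _ ≤ lam / (n + 1) + n / (n + 1) * ((n - 2) / n * lam) := by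
          gcongr
      _ = (n - 1) / (n + 1) * lam := by
          field_simp
          ring

end Yalg

theorem stmt3_general (I : ℕ) (Γ : ℕ → ℝ) (lam : ℝ) (hlam : 0 < lam) :
    ∀ j : ℕ, 1 ≤ j → j ≤ I - 3 →
      (∀ k : ℕ, j + 2 ≤ k → k ≤ I - 2 → |Yalg I Γ k| ≤ lam) →
      |∑ k ∈ Finset.Icc (j + 2) (I - 2), Γ k / ((I : ℝ) - (k : ℝ))|
          ≤ ((I : ℝ) - (j : ℝ) - 3) / ((I : ℝ) - (j : ℝ) - 1) * lam ∧
        |∑ k ∈ Finset.Icc (j + 2) (I - 2), Γ k / ((I : ℝ) - (k : ℝ))| < lam := by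
  intro j _ hj hY
  have hjI : (j : ℝ) + 3 ≤ I := by exact_mod_cast (show j + 3 ≤ I by omega)
  have hbound : |Yalg.tailSum I Γ (j + 2)|
      ≤ ((I : ℝ) - j - 3) / ((I : ℝ) - j - 1) * lam := by
    convert Yalg.abs_tailSum_le Γ (by omega) (by omega) hY using 3 <;> push_cast <;> ring
  have hratio : ((I : ℝ) - j - 3) / ((I : ℝ) - j - 1) < 1 :=
    (div_lt_one (by linarith)).2 (by linarith)
  exact ⟨hbound, hbound.trans_lt (mul_lt_of_lt_one_left hlam hratio)⟩

/-- for `λ > 0` and `1 ≤ j ≤ I−3`, if `|Y_k| ≤ λ` for all `j+2 ≤ k ≤ I−2`,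
then `|Σ_{k=j+2}^{I−2} Γ_k/(I−k)| ≤ ((I−j−3)/(I−j−1))·λ < λ`. -/
theorem stmt3 (I : ℕ) (hI : 3 ≤ I) (Γ : ℕ → ℝ) (lam : ℝ) (hlam : 0 < lam) :
    ∀ j : ℕ, 1 ≤ j → j ≤ I - 3 →
      (∀ k : ℕ, j + 2 ≤ k → k ≤ I - 2 → |Yalg I Γ k| ≤ lam) →
      |∑ k ∈ Finset.Icc (j + 2) (I - 2), Γ k / ((I : ℝ) - (k : ℝ))|
          ≤ ((I : ℝ) - (j : ℝ) - 3) / ((I : ℝ) - (j : ℝ) - 1) * lam ∧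
        |∑ k ∈ Finset.Icc (j + 2) (I - 2), Γ k / ((I : ℝ) - (k : ℝ))| < lam :=
  stmt3_general I Γ lam hlam
end

section
/- For every 1 ≤ j ≤ I−2 and every 0 ≤ m ≤ I−j−2 one has ((I−j+1)/(I−j)) · A(j) + Σ_{k=j+1}^{j+m} A(k)/(I−k) = a(j) − a_Σ^{≥j+m+1}/(I−j−m). (Summations with upper index strictly less than the lower index are empty and zero-valued.) -/
/-!
Writing `S k = a_Σ^{≥k}`, so that `a(k) = S k - S (k+1)`, each summand telescopes:
`A(k)/(I-k) = S k/(I-k+1) - S (k+1)/(I-k)` for `k < I`. Likewise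
`((I-j+1)/(I-j)) A(j) = a(j) - S (j+1)/(I-j)`, so adding up everything cancels except
`a(j) - S (j+m+1)/(I-j-m)`.
-/

/-- `a_Σ^{≥j} = Σ_{k=j}^{I} a(k)`. -/
noncomputable def aSig (I : ℕ) (a : ℕ → ℝ) (j : ℕ) : ℝ :=
  ∑ k ∈ Finset.Icc j I, a k

/-- `A(j) = a(j) − a_Σ^{≥j}/(I−j+1)` for `j ≤ I−1`, and `A(I) = a(I) − a_Σ^{≥I−1}/2`. -/
noncomputable def Acoef (I : ℕ) (a : ℕ → ℝ) (j : ℕ) : ℝ :=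
  if j = I then a I - aSig I a (I - 1) / 2
  else a j - aSig I a j / ((I : ℝ) - (j : ℝ) + 1)

section

variable {I : ℕ} (a : ℕ → ℝ) {j : ℕ}

lemma aSig_eq_add_aSig_succ (h : j ≤ I) : aSig I a j = a j + aSig I a (j + 1) := by
  rw [aSig, aSig, Finset.Icc_eq_cons_Ioc h, Finset.sum_cons, ← Finset.Icc_add_one_left_eq_Ioc]

lemma Acoef_of_lt (h : j < I) :
    Acoef I a j = a j - aSig I a j / ((I : ℝ) - (j : ℝ) + 1) :=
  if_neg h.ne

lemma Acoef_div_eq_sub (h : j < I) :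
    Acoef I a j / ((I : ℝ) - (j : ℝ)) =
      aSig I a j / ((I : ℝ) - (j : ℝ) + 1) - aSig I a (j + 1) / ((I : ℝ) - (j : ℝ)) := by
  have hpos : (0 : ℝ) < (I : ℝ) - (j : ℝ) := by
    rw [sub_pos]
    exact_mod_cast h
  rw [Acoef_of_lt a h, aSig_eq_add_aSig_succ a h.le]
  field_simp
  ring

lemma div_mul_Acoef (h : j < I) :
    ((I : ℝ) - (j : ℝ) + 1) / ((I : ℝ) - (j : ℝ)) * Acoef I a j =
      a j - aSig I a (j + 1) / ((I : ℝ) - (j : ℝ)) := by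
  have hpos : (0 : ℝ) < (I : ℝ) - (j : ℝ) := by
    rw [sub_pos]
    exact_mod_cast h
  rw [Acoef_of_lt a h, aSig_eq_add_aSig_succ a h.le]
  field_simp
  ring

lemma sum_Icc_Acoef_div (m : ℕ) (h : j + m < I) :
    ∑ k ∈ Finset.Icc (j + 1) (j + m), Acoef I a k / ((I : ℝ) - (k : ℝ)) =
      aSig I a (j + 1) / ((I : ℝ) - (j : ℝ)) -
        aSig I a (j + m + 1) / ((I : ℝ) - (j : ℝ) - (m : ℝ)) := by
  set g : ℕ → ℝ := fun k ↦ aSig I a k / ((I : ℝ) - (k : ℝ) + 1)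
  have hterm : ∀ k ∈ Finset.Icc (j + 1) (j + m),
      Acoef I a k / ((I : ℝ) - (k : ℝ)) = -(g (k + 1) - g k) := by
    intro k hk
    rw [Acoef_div_eq_sub a (by grind)]
    simp only [g]
    push_cast
    ring
  rw [Finset.sum_congr rfl hterm, Finset.sum_neg_distrib, ← Finset.Ico_add_one_right_eq_Icc,
    Finset.sum_Ico_sub g (by omega)]
  simp only [g]
  push_cast
  ring

end

theorem stmt5_general (I : ℕ) (a : ℕ → ℝ) :
    ∀ j m : ℕ, 1 ≤ j → j ≤ I - 2 → m ≤ I - j - 2 →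
      ((I : ℝ) - (j : ℝ) + 1) / ((I : ℝ) - (j : ℝ)) * Acoef I a j
          + ∑ k ∈ Finset.Icc (j + 1) (j + m), Acoef I a k / ((I : ℝ) - (k : ℝ))
        = a j - aSig I a (j + m + 1) / ((I : ℝ) - (j : ℝ) - (m : ℝ)) := by
  intro j m hj hjI hm
  rw [div_mul_Acoef a (by omega), sum_Icc_Acoef_div a m (by omega)]
  ring

/-- for `1 ≤ j ≤ I−2` and `0 ≤ m ≤ I−j−2`,
`((I−j+1)/(I−j))·A(j) + Σ_{k=j+1}^{j+m} A(k)/(I−k) = a(j) − a_Σ^{≥j+m+1}/(I−j−m)`. -/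
theorem stmt5 (I : ℕ) (hI : 3 ≤ I) (a : ℕ → ℝ) :
    ∀ j m : ℕ, 1 ≤ j → j ≤ I - 2 → m ≤ I - j - 2 →
      ((I : ℝ) - (j : ℝ) + 1) / ((I : ℝ) - (j : ℝ)) * Acoef I a j
          + ∑ k ∈ Finset.Icc (j + 1) (j + m), Acoef I a k / ((I : ℝ) - (k : ℝ))
        = a j - aSig I a (j + m + 1) / ((I : ℝ) - (j : ℝ) - (m : ℝ)) :=
  stmt5_general I a
end

section
/- Let 2 ≤ j ≤ I−1. If a(j) ≥ a(i) for every 1 ≤ i ≤ j−1 and a(j) − a_Σ^{≥j+1}/(I−j) ≥ 0, then a(j) − a_Σ^{≥j'+1}/(I−j') ≥ 0 for every 1 ≤ j' ≤ j−1. Symmetrically, if a(j) ≤ a(i) for every 1 ≤ i ≤ j−1 and a(j) − a_Σ^{≥j+1}/(I−j) ≤ 0, then a(j) − a_Σ^{≥j'+1}/(I−j') ≤ 0 for every 1 ≤ j' ≤ j−1. -/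
/-! The tail `a(m+1), …, a(I)` splits into the block `a(m+1), …, a(n)` and the tail after `n`;
if `c` bounds every entry of the block and the mean of the shorter tail, it bounds the mean of
the longer one. -/

open Finset

lemma aSig_succ_eq_sum_Ioc_add {I m n : ℕ} (a : ℕ → ℝ) (hmn : m ≤ n) (hnI : n ≤ I) :
    aSig I a (m + 1) = ∑ k ∈ Ioc m n, a k + aSig I a (n + 1) := by
  simp only [aSig, Icc_add_one_left_eq_Ioc]
  exact (sum_Ioc_consecutive a hmn hnI).symm

lemma aSig_neg (I : ℕ) (a : ℕ → ℝ) (j : ℕ) : aSig I (-a) j = -aSig I a j := by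
  simp [aSig]

lemma aSig_succ_div_le {I m n : ℕ} {a : ℕ → ℝ} {c : ℝ} (hmn : m ≤ n) (hnI : n < I)
    (hblock : ∀ k ∈ Ioc m n, a k ≤ c) (htail : aSig I a (n + 1) / ((I : ℝ) - n) ≤ c) :
    aSig I a (m + 1) / ((I : ℝ) - m) ≤ c := by
  have hn : (n : ℝ) < I := by exact_mod_cast hnI
  have hm : (m : ℝ) ≤ n := by exact_mod_cast hmn
  rw [div_le_iff₀ (by linarith)] at htail ⊢
  have hsum : ∑ k ∈ Ioc m n, a k ≤ ((n : ℝ) - m) * c := by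
    simpa [Nat.card_Ioc, Nat.cast_sub hmn] using sum_le_card_nsmul _ _ _ hblock
  calc aSig I a (m + 1) = ∑ k ∈ Ioc m n, a k + aSig I a (n + 1) :=
        aSig_succ_eq_sum_Ioc_add a hmn hnI.le
    _ ≤ ((n : ℝ) - m) * c + ((I : ℝ) - n) * c := add_le_add hsum (by linarith)
    _ = c * ((I : ℝ) - m) := by ring

lemma le_aSig_succ_div {I m n : ℕ} {a : ℕ → ℝ} {c : ℝ} (hmn : m ≤ n) (hnI : n < I)
    (hblock : ∀ k ∈ Ioc m n, c ≤ a k) (htail : c ≤ aSig I a (n + 1) / ((I : ℝ) - n)) :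
    c ≤ aSig I a (m + 1) / ((I : ℝ) - m) := by
  have key := aSig_succ_div_le (a := -a) (c := -c) hmn hnI
    (fun k hk => neg_le_neg (hblock k hk)) (by rw [aSig_neg, neg_div]; exact neg_le_neg htail)
  rw [aSig_neg, neg_div] at key
  exact neg_le_neg_iff.mp key

theorem stmt8_general (I : ℕ) (a : ℕ → ℝ) :
    ∀ j : ℕ, 2 ≤ j → j ≤ I - 1 →
      ((∀ i : ℕ, 1 ≤ i → i ≤ j - 1 → a i ≤ a j) →
        0 ≤ a j - aSig I a (j + 1) / ((I : ℝ) - (j : ℝ)) →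
        ∀ j' : ℕ, 1 ≤ j' → j' ≤ j - 1 →
          0 ≤ a j - aSig I a (j' + 1) / ((I : ℝ) - (j' : ℝ))) ∧
      ((∀ i : ℕ, 1 ≤ i → i ≤ j - 1 → a j ≤ a i) →
        a j - aSig I a (j + 1) / ((I : ℝ) - (j : ℝ)) ≤ 0 →
        ∀ j' : ℕ, 1 ≤ j' → j' ≤ j - 1 →
          a j - aSig I a (j' + 1) / ((I : ℝ) - (j' : ℝ)) ≤ 0) := by
  intro j hj2 hjI
  have hjI' : j < I := by omega
  have hblock : ∀ j' k, k ∈ Ioc j' j → k = j ∨ 1 ≤ k ∧ k ≤ j - 1 := by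
    intro j' k hk
    rw [mem_Ioc] at hk
    omega
  constructor
  · intro hmax h0 j' _ hj'j
    rw [sub_nonneg] at h0 ⊢
    refine aSig_succ_div_le (by omega) hjI' (fun k hk => ?_) h0
    rcases hblock j' k hk with rfl | ⟨hk1, hkj⟩
    exacts [le_rfl, hmax k hk1 hkj]
  · intro hmin h0 j' _ hj'j
    rw [sub_nonpos] at h0 ⊢
    refine le_aSig_succ_div (by omega) hjI' (fun k hk => ?_) h0
    rcases hblock j' k hk with rfl | ⟨hk1, hkj⟩
    exacts [le_rfl, hmin k hk1 hkj]

/-- for `2 ≤ j ≤ I−1`: if `a(j) ≥ a(i)` for all `1 ≤ i ≤ j−1` and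
`a(j) − a_Σ^{≥j+1}/(I−j) ≥ 0`, then `a(j) − a_Σ^{≥j'+1}/(I−j') ≥ 0` for all `1 ≤ j' ≤ j−1`;
symmetrically with all inequalities reversed. -/
theorem stmt8 (I : ℕ) (hI : 3 ≤ I) (a : ℕ → ℝ) :
    ∀ j : ℕ, 2 ≤ j → j ≤ I - 1 →
      ((∀ i : ℕ, 1 ≤ i → i ≤ j - 1 → a i ≤ a j) →
        0 ≤ a j - aSig I a (j + 1) / ((I : ℝ) - (j : ℝ)) →
        ∀ j' : ℕ, 1 ≤ j' → j' ≤ j - 1 →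
          0 ≤ a j - aSig I a (j' + 1) / ((I : ℝ) - (j' : ℝ))) ∧
      ((∀ i : ℕ, 1 ≤ i → i ≤ j - 1 → a j ≤ a i) →
        a j - aSig I a (j + 1) / ((I : ℝ) - (j : ℝ)) ≤ 0 →
        ∀ j' : ℕ, 1 ≤ j' → j' ≤ j - 1 →
          a j - aSig I a (j' + 1) / ((I : ℝ) - (j' : ℝ)) ≤ 0) :=
  stmt8_general I a
end

section
/- Let 1 ≤ j ≤ I−1. Assume: if τ(j) > 0 and A(j) ≥ 0 then a(j) ≥ a(i) for every 1 ≤ i ≤ j−1; and if τ(j) > 0 and A(j) ≤ 0 then a(j) ≤ a(i) for every 1 ≤ i ≤ j−1. Then θ(j) is continuous on [0,T] and monotone on [0,T]; moreover, if A(j) ≥ 0 then θ(j) is monotone nondecreasing, and if A(j) ≤ 0 then θ(j) is monotone nonincreasing. -/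
open MeasureTheory

/-- The largest index `j ≤ I−2` with `τ(j) ≤ t` (and `0` if none). -/
noncomputable def lastIdx (I : ℕ) (τ : ℕ → ℝ) (t : ℝ) : ℕ :=
  (Finset.filter (fun j => τ j ≤ t) (Finset.range (I - 1))).sup id

/-- The candidate equilibrium stock price drift `μ`, defined piecewise:
for `t ∈ [τ(j), τ(j+1))` (with `0 ≤ j ≤ I−2` the largest index with `τ(j) ≤ t`),
`μ(t) = −κ(t)·(γ(t)·a_Σ^{≥j+1}/(I−j) + Σ_{k=1}^{j} γ(τ(k))·A(k)/(I−k))`, and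
for `t ∈ [τ(I−1), T]`,
`μ(t) = −κ(t)·(γ(t)·a_Σ^{≥I−1}/2 + Σ_{k=1}^{I−2} γ(τ(k))·A(k)/(I−k))`. -/
noncomputable def muDrift (κ γ : ℝ → ℝ) (I : ℕ) (a : ℕ → ℝ) (τ : ℕ → ℝ) (t : ℝ) : ℝ :=
  if t < τ (I - 1) then
    -(κ t) * (γ t * aSig I a (lastIdx I τ t + 1) / ((I : ℝ) - (lastIdx I τ t : ℝ))
      + ∑ k ∈ Finset.Icc 1 (lastIdx I τ t), γ (τ k) * Acoef I a k / ((I : ℝ) - (k : ℝ)))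
  else
    -(κ t) * (γ t * aSig I a (I - 1) / 2
      + ∑ k ∈ Finset.Icc 1 (I - 2), γ (τ k) * Acoef I a k / ((I : ℝ) - (k : ℝ)))

/-- Agent `(j)`'s candidate optimal trading strategy:
`θ(j)(t) = θ(j)_{0−} + μ(t)/κ(t) + γ(t)·a(j)` for `t ≤ τ(j)`, frozen afterwards. -/
noncomputable def thetaEq (κ γ : ℝ → ℝ) (I : ℕ) (a : ℕ → ℝ) (τ : ℕ → ℝ)
    (θ0 : ℕ → ℝ) (j : ℕ) (t : ℝ) : ℝ :=
  if t ≤ τ j then θ0 j + muDrift κ γ I a τ t / κ t + γ t * a j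
  else θ0 j + muDrift κ γ I a τ (τ j) / κ (τ j) + γ (τ j) * a j

/-!
On `[τ(k), τ(k+1))` the function `μ/κ + γ·a(j)` is affine in `γ` with slope
`b_k = a(j) − a_Σ^{≥k+1}/(I−k)`. Since `A(k)/(I−k) = b_k − b_{k−1}`, summation by parts turns the
piecewise formula for `μ` into the Stieltjes sum `Σ_k b_k (γ(τ(k+1) ∧ t) − γ(τ(k) ∧ t))`, so `θ(j)`
is this sum stopped at `τ(j)`. It is continuous because `γ` is, and only the slopes `b_k` with
`k < j` contribute to it; these have the sign of `A(j)`, because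
`(I−k)·b_k = Σ_{k<i<j} (a(j) − a(i)) + (I−j+1)·A(j)`.
-/

open Finset

noncomputable def thetaSlope (I : ℕ) (a : ℕ → ℝ) (j k : ℕ) : ℝ :=
  a j - aSig I a (k + 1) / ((I : ℝ) - k)

/-- On `[τ(I−1), T]` the drift `μ` continues the formula of the piece `j = I−2`, so the grid
skips `τ(I−1)` and ends at `T`. -/
noncomputable def tauGrid (T : ℝ) (I : ℕ) (τ : ℕ → ℝ) (k : ℕ) : ℝ :=
  if k = I - 1 then T else τ k

def cappedIncr (f : ℝ → ℝ) (u v t : ℝ) : ℝ :=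
  f (min t v) - f (min t u)

noncomputable def slopeIntegral (T : ℝ) (γ : ℝ → ℝ) (I : ℕ) (a : ℕ → ℝ) (τ : ℕ → ℝ) (j : ℕ)
    (t : ℝ) : ℝ :=
  ∑ k ∈ range (I - 1),
    thetaSlope I a j k * cappedIncr γ (tauGrid T I τ k) (tauGrid T I τ (k + 1)) t

section cappedIncr

variable {f : ℝ → ℝ} {u v t : ℝ}

lemma cappedIncr_of_le_left (huv : u ≤ v) (ht : t ≤ u) : cappedIncr f u v t = 0 := by
  rw [cappedIncr, min_eq_left ht, min_eq_left (ht.trans huv), sub_self]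

lemma cappedIncr_of_right_le (huv : u ≤ v) (ht : v ≤ t) : cappedIncr f u v t = f v - f u := by
  rw [cappedIncr, min_eq_right ht, min_eq_right (huv.trans ht)]

lemma cappedIncr_of_mem_Icc (ht : t ∈ Set.Icc u v) : cappedIncr f u v t = f t - f u := by
  rw [cappedIncr, min_eq_left ht.2, min_eq_right ht.1]

variable {s : Set ℝ}

lemma monotoneOn_cappedIncr (hf : MonotoneOn f s) (hu : u ∈ s) (hv : v ∈ s) (huv : u ≤ v) :
    MonotoneOn (cappedIncr f u v) s := by
  intro x hx y hy hxy
  rcases le_total x u with hxu | hux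
  · rw [cappedIncr_of_le_left huv hxu, cappedIncr, sub_nonneg]
    exact hf (min_rec' s hy hu) (min_rec' s hy hv) (min_le_min_left y huv)
  · rw [cappedIncr, cappedIncr, min_eq_right hux, min_eq_right (hux.trans hxy)]
    exact sub_le_sub_right (hf (min_rec' s hx hv) (min_rec' s hy hv) (min_le_min_right v hxy)) _

lemma continuousOn_cappedIncr (hf : ContinuousOn f s) (hu : u ∈ s) (hv : v ∈ s) :
    ContinuousOn (cappedIncr f u v) s :=
  (hf.comp (continuous_id.min continuous_const).continuousOn fun _ ht => min_rec' s ht hv).sub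
    (hf.comp (continuous_id.min continuous_const).continuousOn fun _ ht => min_rec' s ht hu)

end cappedIncr

section coefficients

variable (I : ℕ) (a : ℕ → ℝ)

lemma aSig_eq_sum_Ico_add {k l : ℕ} (hkl : k ≤ l) (hl : l ≤ I + 1) :
    aSig I a k = ∑ i ∈ Ico k l, a i + aSig I a l := by
  simp only [aSig, ← Ico_add_one_right_eq_Icc]
  exact (sum_Ico_consecutive a hkl hl).symm

lemma Acoef_div_eq_thetaSlope_sub (j : ℕ) {k : ℕ} (hk : 1 ≤ k) (hkI : k < I) :
    Acoef I a k / ((I : ℝ) - k) = thetaSlope I a j k - thetaSlope I a j (k - 1) := by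
  have hsplit : aSig I a k = a k + aSig I a (k + 1) := by
    simpa using aSig_eq_sum_Ico_add I a (Nat.le_succ k) (by omega)
  have hkI' : (k : ℝ) + 1 ≤ I := by exact_mod_cast hkI
  have h1 : (I : ℝ) - k ≠ 0 := by linarith
  have h2 : (I : ℝ) - k + 1 ≠ 0 := by linarith
  have h3 : (I : ℝ) - (k - 1) ≠ 0 := by linarith
  rw [Acoef, if_neg hkI.ne, thetaSlope, thetaSlope, Nat.sub_add_cancel hk, Nat.cast_sub hk,
    Nat.cast_one, hsplit]
  field_simp
  ring

lemma sum_Icc_by_parts (f g : ℕ → ℝ) (m : ℕ) :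
    ∑ k ∈ Icc 1 m, f k * (g k - g (k - 1)) + ∑ k ∈ range m, g k * (f (k + 1) - f k)
      = f m * g m - f 0 * g 0 := by
  induction m with
  | zero => simp
  | succ m ih =>
    rw [sum_Icc_succ_top (by omega), sum_range_succ, Nat.add_sub_cancel]
    linear_combination ih

lemma piece_add_mul_eq_sum_thetaSlope (j : ℕ) {f : ℕ → ℝ} (hf0 : f 0 = 0) (c : ℝ) {m : ℕ}
    (hm : m + 2 ≤ I) :
    -(c * aSig I a (m + 1) / ((I : ℝ) - m) + ∑ k ∈ Icc 1 m, f k * Acoef I a k / ((I : ℝ) - k))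
        + c * a j
      = ∑ k ∈ range m, thetaSlope I a j k * (f (k + 1) - f k)
        + thetaSlope I a j m * (c - f m) := by
  have hsum : ∑ k ∈ Icc 1 m, f k * Acoef I a k / ((I : ℝ) - k)
      = ∑ k ∈ Icc 1 m, f k * (thetaSlope I a j k - thetaSlope I a j (k - 1)) :=
    sum_congr rfl fun k hk => by
      rw [mem_Icc] at hk
      rw [mul_div_assoc, Acoef_div_eq_thetaSlope_sub I a j hk.1 (by omega)]
  have hlast : aSig I a (m + 1) / ((I : ℝ) - m) = a j - thetaSlope I a j m := by
    rw [thetaSlope]; ring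
  rw [hsum, mul_div_assoc, hlast]
  linear_combination -(sum_Icc_by_parts f (thetaSlope I a j) m) + thetaSlope I a j 0 * hf0

lemma mul_thetaSlope_eq {j k : ℕ} (hkj : k < j) (hjI : j < I) :
    ((I : ℝ) - k) * thetaSlope I a j k
      = ∑ i ∈ Ico (k + 1) j, (a j - a i) + ((I : ℝ) - j + 1) * Acoef I a j := by
  have hjI' : (j : ℝ) + 1 ≤ I := by exact_mod_cast hjI
  have hkI : (k : ℝ) < I := by exact_mod_cast hkj.trans hjI
  have h1 : (I : ℝ) - k ≠ 0 := by linarith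
  have h2 : (I : ℝ) - j + 1 ≠ 0 := by linarith
  rw [thetaSlope, Acoef, if_neg hjI.ne, aSig_eq_sum_Ico_add I a hkj (by omega), sum_sub_distrib,
    sum_const, Nat.card_Ico, nsmul_eq_mul, Nat.cast_sub hkj]
  push_cast
  field_simp
  ring

variable {I a} {j : ℕ}

lemma thetaSlope_nonneg (hjI : j < I) (hA : 0 ≤ Acoef I a j)
    (ha : ∀ i, 1 ≤ i → i ≤ j - 1 → a i ≤ a j) {k : ℕ} (hkj : k < j) :
    0 ≤ thetaSlope I a j k := by
  have hIk : (0 : ℝ) < I - k := sub_pos.2 (by exact_mod_cast hkj.trans hjI)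
  have hIj : (0 : ℝ) ≤ I - j + 1 := by
    have : (j : ℝ) ≤ I := by exact_mod_cast hjI.le
    linarith
  refine nonneg_of_mul_nonneg_right ?_ hIk
  rw [mul_thetaSlope_eq I a hkj hjI]
  refine add_nonneg (sum_nonneg fun i hi => ?_) (mul_nonneg hIj hA)
  rw [mem_Ico] at hi
  exact sub_nonneg.2 (ha i (by omega) (by omega))

lemma thetaSlope_nonpos (hjI : j < I) (hA : Acoef I a j ≤ 0)
    (ha : ∀ i, 1 ≤ i → i ≤ j - 1 → a j ≤ a i) {k : ℕ} (hkj : k < j) :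
    thetaSlope I a j k ≤ 0 := by
  have hIk : (0 : ℝ) < I - k := sub_pos.2 (by exact_mod_cast hkj.trans hjI)
  have hIj : (0 : ℝ) ≤ I - j + 1 := by
    have : (j : ℝ) ≤ I := by exact_mod_cast hjI.le
    linarith
  refine nonpos_of_mul_nonpos_right ?_ hIk
  rw [mul_thetaSlope_eq I a hkj hjI]
  refine add_nonpos (sum_nonpos fun i hi => ?_) (mul_nonpos_of_nonneg_of_nonpos hIj hA)
  rw [mem_Ico] at hi
  exact sub_nonpos.2 (ha i (by omega) (by omega))

end coefficients

section lastIdx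

variable {I : ℕ} {τ : ℕ → ℝ} {t : ℝ}

lemma lastIdx_le_sub_two : lastIdx I τ t ≤ I - 2 :=
  Finset.sup_le fun k hk => by
    rw [mem_filter, mem_range] at hk
    simp only [id]
    omega

lemma tau_lastIdx_le (hI : 2 ≤ I) (hτ0 : τ 0 = 0) (ht : 0 ≤ t) : τ (lastIdx I τ t) ≤ t := by
  have h0 : 0 ∈ filter (fun k => τ k ≤ t) (range (I - 1)) :=
    mem_filter.2 ⟨mem_range.2 (by omega), hτ0 ▸ ht⟩
  obtain ⟨k, hk, hsup⟩ := exists_mem_eq_sup _ ⟨0, h0⟩ id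
  rw [lastIdx, hsup]
  exact (mem_filter.1 hk).2

lemma lt_tau_of_lastIdx_lt {k : ℕ} (hk : lastIdx I τ t < k) (hkI : k ≤ I - 2) : t < τ k := by
  by_contra! h
  exact hk.not_ge (le_sup (f := id) (mem_filter.2 ⟨mem_range.2 (by omega), h⟩))

end lastIdx

section tauGrid

variable {T : ℝ} {I : ℕ} {τ : ℕ → ℝ}

lemma tauGrid_of_ne {k : ℕ} (hk : k ≠ I - 1) : tauGrid T I τ k = τ k :=
  if_neg hk

lemma tauGrid_mono (hτmono : ∀ j k : ℕ, j ≤ k → k ≤ I → τ j ≤ τ k) (hτT : τ (I - 1) < T)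
    {k l : ℕ} (hkl : k ≤ l) (hl : l ≤ I - 1) : tauGrid T I τ k ≤ tauGrid T I τ l := by
  unfold tauGrid
  split_ifs with hk hl'
  · rfl
  · omega
  · exact (hτmono k (I - 1) (by omega) (by omega)).trans hτT.le
  · exact hτmono k l hkl (by omega)

lemma tauGrid_mem_Icc (hI : 2 ≤ I) (hτ0 : τ 0 = 0)
    (hτmono : ∀ j k : ℕ, j ≤ k → k ≤ I → τ j ≤ τ k) (hτT : τ (I - 1) < T)
    {k : ℕ} (hk : k ≤ I - 1) : tauGrid T I τ k ∈ Set.Icc 0 T := by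
  constructor
  · calc (0 : ℝ) = tauGrid T I τ 0 := by rw [tauGrid_of_ne (by omega), hτ0]
      _ ≤ tauGrid T I τ k := tauGrid_mono hτmono hτT (Nat.zero_le k) hk
  · calc tauGrid T I τ k ≤ tauGrid T I τ (I - 1) := tauGrid_mono hτmono hτT hk le_rfl
      _ = T := if_pos rfl

lemma tau_mem_Icc (hτ0 : τ 0 = 0) (hτmono : ∀ j k : ℕ, j ≤ k → k ≤ I → τ j ≤ τ k)
    (hτT : τ (I - 1) < T) {j : ℕ} (hj : j ≤ I - 1) : τ j ∈ Set.Icc 0 T :=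
  ⟨hτ0 ▸ hτmono 0 j (Nat.zero_le j) (by omega), (hτmono j (I - 1) hj (by omega)).trans hτT.le⟩

end tauGrid

section slopeIntegral

variable {T : ℝ} {κ γ : ℝ → ℝ} {I : ℕ} {a τ : ℕ → ℝ} {j : ℕ}

lemma slopeIntegral_eq_of_mem_Icc (hτmono : ∀ j k : ℕ, j ≤ k → k ≤ I → τ j ≤ τ k)
    (hτT : τ (I - 1) < T) {m : ℕ} (hm : m + 2 ≤ I) {t : ℝ}
    (ht : t ∈ Set.Icc (τ m) (tauGrid T I τ (m + 1))) :
    slopeIntegral T γ I a τ j t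
      = ∑ k ∈ range m, thetaSlope I a j k * (γ (τ (k + 1)) - γ (τ k))
        + thetaSlope I a j m * (γ t - γ (τ m)) := by
  have hgrid : ∀ k ≤ m, tauGrid T I τ k = τ k := fun k hk => tauGrid_of_ne (by omega)
  have hmono := @tauGrid_mono T I τ hτmono hτT
  have hlow : ∀ k ∈ range m,
      thetaSlope I a j k * cappedIncr γ (tauGrid T I τ k) (tauGrid T I τ (k + 1)) t
        = thetaSlope I a j k * (γ (τ (k + 1)) - γ (τ k)) := fun k hk => by
    rw [mem_range] at hk
    have hle : tauGrid T I τ (k + 1) ≤ t :=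
      (hmono hk (by omega)).trans ((hgrid m le_rfl).trans_le ht.1)
    rw [cappedIncr_of_right_le (hmono k.le_succ (by omega)) hle, hgrid k (by omega),
      hgrid (k + 1) hk]
  have hhigh : ∑ k ∈ Ico (m + 1) (I - 1),
      thetaSlope I a j k * cappedIncr γ (tauGrid T I τ k) (tauGrid T I τ (k + 1)) t = 0 :=
    sum_eq_zero fun k hk => by
      rw [mem_Ico] at hk
      rw [cappedIncr_of_le_left (hmono k.le_succ (by omega)) (ht.2.trans (hmono hk.1 (by omega))),
        mul_zero]
  rw [slopeIntegral, ← sum_range_add_sum_Ico _ (show m + 1 ≤ I - 1 by omega), hhigh, add_zero,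
    sum_range_succ, sum_congr rfl hlow, cappedIncr_of_mem_Icc (by rwa [hgrid m le_rfl]),
    hgrid m le_rfl]

lemma muDrift_div_add_mul_eq_slopeIntegral (hγ0 : γ 0 = 0) (hI : 2 ≤ I) (hτ0 : τ 0 = 0)
    (hτmono : ∀ j k : ℕ, j ≤ k → k ≤ I → τ j ≤ τ k) (hτT : τ (I - 1) < T) {t : ℝ}
    (ht : t ∈ Set.Icc 0 T) (hκ : κ t ≠ 0) :
    muDrift κ γ I a τ t / κ t + γ t * a j = slopeIntegral T γ I a τ j t := by
  have hf0 : γ (τ 0) = 0 := by rw [hτ0, hγ0]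
  rw [muDrift]
  split_ifs with hlt
  · set m := lastIdx I τ t
    have hm : m ≤ I - 2 := lastIdx_le_sub_two
    have hup : t ≤ tauGrid T I τ (m + 1) := by
      rcases eq_or_ne (m + 1) (I - 1) with h | h
      · rw [tauGrid, if_pos h]; exact ht.2
      · rw [tauGrid_of_ne h]; exact (lt_tau_of_lastIdx_lt (lt_add_one m) (by omega)).le
    rw [neg_mul, neg_div, mul_div_cancel_left₀ _ hκ,
      slopeIntegral_eq_of_mem_Icc hτmono hτT (by omega) ⟨tau_lastIdx_le hI hτ0 ht.1, hup⟩]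
    exact piece_add_mul_eq_sum_thetaSlope I a j hf0 (γ t) (by omega)
  · have hsucc : I - 2 + 1 = I - 1 := by omega
    have hlow : τ (I - 2) ≤ t := (hτmono _ _ (by omega) (by omega)).trans (not_lt.1 hlt)
    have hup : t ≤ tauGrid T I τ (I - 2 + 1) := by rw [hsucc, tauGrid, if_pos rfl]; exact ht.2
    rw [neg_mul, neg_div, mul_div_cancel_left₀ _ hκ,
      slopeIntegral_eq_of_mem_Icc hτmono hτT (by omega) ⟨hlow, hup⟩]
    have h2 : (I : ℝ) - ((I - 2 : ℕ) : ℝ) = 2 := by push_cast [Nat.cast_sub hI]; ring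
    simpa only [hsucc, h2] using
      piece_add_mul_eq_sum_thetaSlope I a j hf0 (γ t) (m := I - 2) (by omega)

lemma thetaEq_eqOn_add_slopeIntegral_min (θ0 : ℕ → ℝ) (hκpos : ∀ t ∈ Set.Icc (0 : ℝ) T, 0 < κ t)
    (hγ0 : γ 0 = 0) (hI : 2 ≤ I) (hτ0 : τ 0 = 0)
    (hτmono : ∀ j k : ℕ, j ≤ k → k ≤ I → τ j ≤ τ k) (hτT : τ (I - 1) < T) (hj : j ≤ I - 1) :
    Set.EqOn (thetaEq κ γ I a τ θ0 j)
      (fun t => θ0 j + slopeIntegral T γ I a τ j (min t (τ j))) (Set.Icc 0 T) := by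
  intro t ht
  have hdrift : ∀ s ∈ Set.Icc 0 T,
      muDrift κ γ I a τ s / κ s + γ s * a j = slopeIntegral T γ I a τ j s := fun s hs =>
    muDrift_div_add_mul_eq_slopeIntegral hγ0 hI hτ0 hτmono hτT hs (hκpos s hs).ne'
  simp only [thetaEq]
  split_ifs with h
  · rw [min_eq_left h, add_assoc, hdrift t ht]
  · rw [min_eq_right (not_le.1 h).le, add_assoc, hdrift _ (tau_mem_Icc hτ0 hτmono hτT hj)]

end slopeIntegral

section stopped

variable {T : ℝ} {γ : ℝ → ℝ} {I : ℕ} {a τ : ℕ → ℝ} {j : ℕ}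

lemma continuousOn_slopeIntegral_min (hγ : ContinuousOn γ (Set.Icc 0 T)) (hI : 2 ≤ I)
    (hτ0 : τ 0 = 0) (hτmono : ∀ j k : ℕ, j ≤ k → k ≤ I → τ j ≤ τ k) (hτT : τ (I - 1) < T)
    (hj : j ≤ I - 1) :
    ContinuousOn (fun t => slopeIntegral T γ I a τ j (min t (τ j))) (Set.Icc 0 T) := by
  have hτj := tau_mem_Icc hτ0 hτmono hτT hj
  have hcont : ContinuousOn (slopeIntegral T γ I a τ j) (Set.Icc 0 T) :=
    continuousOn_finsetSum _ fun k hk => continuousOn_const.mul <|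
      continuousOn_cappedIncr hγ (tauGrid_mem_Icc hI hτ0 hτmono hτT (by simp at hk; omega))
        (tauGrid_mem_Icc hI hτ0 hτmono hτT (by simp at hk; omega))
  exact hcont.comp (continuous_id.min continuous_const).continuousOn
    fun t ht => ⟨le_min ht.1 hτj.1, (min_le_left _ _).trans ht.2⟩

lemma monotoneOn_cappedIncr_tauGrid_min (hγ : MonotoneOn γ (Set.Icc 0 T)) (hI : 2 ≤ I)
    (hτ0 : τ 0 = 0) (hτmono : ∀ j k : ℕ, j ≤ k → k ≤ I → τ j ≤ τ k) (hτT : τ (I - 1) < T)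
    (hj : j ≤ I - 1) {k : ℕ} (hk : k < I - 1) :
    MonotoneOn (fun t => cappedIncr γ (tauGrid T I τ k) (tauGrid T I τ (k + 1)) (min t (τ j)))
      (Set.Icc 0 T) := by
  have hτj := tau_mem_Icc hτ0 hτmono hτT hj
  exact (monotoneOn_cappedIncr hγ (tauGrid_mem_Icc hI hτ0 hτmono hτT (by omega))
    (tauGrid_mem_Icc hI hτ0 hτmono hτT (by omega)) (tauGrid_mono hτmono hτT k.le_succ hk)).comp
    (fun _ _ _ _ h => min_le_min_right _ h)
    fun t ht => ⟨le_min ht.1 hτj.1, (min_le_left _ _).trans ht.2⟩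

lemma cappedIncr_tauGrid_min_eq_zero (hτmono : ∀ j k : ℕ, j ≤ k → k ≤ I → τ j ≤ τ k)
    (hτT : τ (I - 1) < T) {k : ℕ} (hjk : j ≤ k) (hk : k < I - 1) (t : ℝ) :
    cappedIncr γ (tauGrid T I τ k) (tauGrid T I τ (k + 1)) (min t (τ j)) = 0 := by
  refine cappedIncr_of_le_left (tauGrid_mono hτmono hτT k.le_succ hk) ((min_le_right _ _).trans ?_)
  rw [tauGrid_of_ne hk.ne]
  exact hτmono j k hjk (by omega)

lemma monotoneOn_slopeIntegral_min (hγ : MonotoneOn γ (Set.Icc 0 T)) (hI : 2 ≤ I)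
    (hτ0 : τ 0 = 0) (hτmono : ∀ j k : ℕ, j ≤ k → k ≤ I → τ j ≤ τ k) (hτT : τ (I - 1) < T)
    (hj : j ≤ I - 1) (hslope : 0 < τ j → ∀ k < j, 0 ≤ thetaSlope I a j k) :
    MonotoneOn (fun t => slopeIntegral T γ I a τ j (min t (τ j))) (Set.Icc 0 T) := by
  intro x hx y hy hxy
  rcases (tau_mem_Icc hτ0 hτmono hτT hj).1.eq_or_lt with h0 | h0
  · simp only [← h0, min_eq_right hx.1, min_eq_right hy.1, le_refl]
  refine sum_le_sum fun k hk => ?_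
  rw [mem_range] at hk
  rcases lt_or_ge k j with hkj | hjk
  · exact mul_le_mul_of_nonneg_left
      (monotoneOn_cappedIncr_tauGrid_min hγ hI hτ0 hτmono hτT hj hk hx hy hxy) (hslope h0 k hkj)
  · rw [cappedIncr_tauGrid_min_eq_zero hτmono hτT hjk hk,
      cappedIncr_tauGrid_min_eq_zero hτmono hτT hjk hk]

lemma antitoneOn_slopeIntegral_min (hγ : MonotoneOn γ (Set.Icc 0 T)) (hI : 2 ≤ I)
    (hτ0 : τ 0 = 0) (hτmono : ∀ j k : ℕ, j ≤ k → k ≤ I → τ j ≤ τ k) (hτT : τ (I - 1) < T)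
    (hj : j ≤ I - 1) (hslope : 0 < τ j → ∀ k < j, thetaSlope I a j k ≤ 0) :
    AntitoneOn (fun t => slopeIntegral T γ I a τ j (min t (τ j))) (Set.Icc 0 T) := by
  intro x hx y hy hxy
  rcases (tau_mem_Icc hτ0 hτmono hτT hj).1.eq_or_lt with h0 | h0
  · simp only [← h0, min_eq_right hx.1, min_eq_right hy.1, le_refl]
  refine sum_le_sum fun k hk => ?_
  rw [mem_range] at hk
  rcases lt_or_ge k j with hkj | hjk
  · exact mul_le_mul_of_nonpos_left
      (monotoneOn_cappedIncr_tauGrid_min hγ hI hτ0 hτmono hτT hj hk hx hy hxy) (hslope h0 k hkj)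
  · rw [cappedIncr_tauGrid_min_eq_zero hτmono hτT hjk hk,
      cappedIncr_tauGrid_min_eq_zero hτmono hτT hjk hk]

end stopped

theorem stmt9_general (T : ℝ) (κ γ : ℝ → ℝ)
    (hκpos : ∀ t ∈ Set.Icc (0 : ℝ) T, 0 < κ t)
    (hγcont : ContinuousOn γ (Set.Icc 0 T))
    (hγmono : StrictMonoOn γ (Set.Icc 0 T))
    (hγ0 : γ 0 = 0)
    (I : ℕ) (hI : 3 ≤ I) (a : ℕ → ℝ) (τ : ℕ → ℝ)
    (hτ0 : τ 0 = 0) (hτmono : ∀ j k : ℕ, j ≤ k → k ≤ I → τ j ≤ τ k)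
    (hτT : τ (I - 1) < T)
    (θ0 : ℕ → ℝ) (j : ℕ) (hj2 : j ≤ I - 1)
    (hpos : 0 < τ j → 0 ≤ Acoef I a j → ∀ i : ℕ, 1 ≤ i → i ≤ j - 1 → a i ≤ a j)
    (hneg : 0 < τ j → Acoef I a j ≤ 0 → ∀ i : ℕ, 1 ≤ i → i ≤ j - 1 → a j ≤ a i) :
    ContinuousOn (thetaEq κ γ I a τ θ0 j) (Set.Icc 0 T) ∧
    (MonotoneOn (thetaEq κ γ I a τ θ0 j) (Set.Icc 0 T) ∨
      AntitoneOn (thetaEq κ γ I a τ θ0 j) (Set.Icc 0 T)) ∧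
    (0 ≤ Acoef I a j → MonotoneOn (thetaEq κ γ I a τ θ0 j) (Set.Icc 0 T)) ∧
    (Acoef I a j ≤ 0 → AntitoneOn (thetaEq κ γ I a τ θ0 j) (Set.Icc 0 T)) := by
  have hI2 : 2 ≤ I := by omega
  have hjI : j < I := by omega
  have hrepr := thetaEq_eqOn_add_slopeIntegral_min (a := a) θ0 hκpos hγ0 hI2 hτ0 hτmono hτT hj2
  have hcont := ((continuousOn_slopeIntegral_min hγcont hI2 hτ0 hτmono hτT hj2).const_add
    (θ0 j)).congr hrepr
  have hmono : 0 ≤ Acoef I a j → MonotoneOn (thetaEq κ γ I a τ θ0 j) (Set.Icc 0 T) := fun hA =>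
    ((monotoneOn_slopeIntegral_min hγmono.monotoneOn hI2 hτ0 hτmono hτT hj2 fun hτj _ hk =>
      thetaSlope_nonneg hjI hA (hpos hτj hA) hk).const_add (θ0 j)).congr hrepr.symm
  have hanti : Acoef I a j ≤ 0 → AntitoneOn (thetaEq κ γ I a τ θ0 j) (Set.Icc 0 T) := fun hA =>
    ((antitoneOn_slopeIntegral_min hγmono.monotoneOn hI2 hτ0 hτmono hτT hj2 fun hτj _ hk =>
      thetaSlope_nonpos hjI hA (hneg hτj hA) hk).const_add (θ0 j)).congr hrepr.symm
  exact ⟨hcont, (le_total 0 (Acoef I a j)).imp hmono hanti, hmono, hanti⟩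

/-- under the sign hypotheses of Lemma `theta_sign_lem`, the strategy
`θ(j)` is continuous and monotone on `[0,T]`; it is nondecreasing if `A(j) ≥ 0` and
nonincreasing if `A(j) ≤ 0`. -/
theorem stmt9 (T : ℝ) (κ γ : ℝ → ℝ) (hT : 0 < T)
    (hκcont : ContinuousOn κ (Set.Icc 0 T))
    (hκpos : ∀ t ∈ Set.Icc (0 : ℝ) T, 0 < κ t)
    (hγcont : ContinuousOn γ (Set.Icc 0 T))
    (hγmono : StrictMonoOn γ (Set.Icc 0 T))
    (hγ0 : γ 0 = 0) (hγT : γ T = 1)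
    (I : ℕ) (hI : 3 ≤ I) (a : ℕ → ℝ) (τ : ℕ → ℝ)
    (hτ0 : τ 0 = 0) (hτmono : ∀ j k : ℕ, j ≤ k → k ≤ I → τ j ≤ τ k)
    (hτlast : τ (I - 1) = τ I) (hτT : τ (I - 1) < T)
    (θ0 : ℕ → ℝ) (j : ℕ) (hj1 : 1 ≤ j) (hj2 : j ≤ I - 1)
    (hpos : 0 < τ j → 0 ≤ Acoef I a j → ∀ i : ℕ, 1 ≤ i → i ≤ j - 1 → a i ≤ a j)
    (hneg : 0 < τ j → Acoef I a j ≤ 0 → ∀ i : ℕ, 1 ≤ i → i ≤ j - 1 → a j ≤ a i) :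
    ContinuousOn (thetaEq κ γ I a τ θ0 j) (Set.Icc 0 T) ∧
    (MonotoneOn (thetaEq κ γ I a τ θ0 j) (Set.Icc 0 T) ∨
      AntitoneOn (thetaEq κ γ I a τ θ0 j) (Set.Icc 0 T)) ∧
    (0 ≤ Acoef I a j → MonotoneOn (thetaEq κ γ I a τ θ0 j) (Set.Icc 0 T)) ∧
    (Acoef I a j ≤ 0 → AntitoneOn (thetaEq κ γ I a τ θ0 j) (Set.Icc 0 T)) :=
  stmt9_general T κ γ hκpos hγcont hγmono hγ0 I hI a τ hτ0 hτmono hτT θ0 j hj2 hpos hneg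
end

section
/- Let 1 ≤ j ≤ I−2 and 0 ≤ m ≤ I−j−2, and let t lie in the open interval (τ(j+m), τ(j+m+1)) if m ≤ I−j−3, or in (τ(I−2), T) if m = I−j−2. Then the function s ↦ Y(j)_s / (∫_s^T κ(u) du) is differentiable at t with derivative ( κ(t) / (∫_t^T κ(u) du)² ) · ( ( ((I−j+1)/(I−j))·A(j) + Σ_{k=j+1}^{j+m} A(k)/(I−k) )·F(t) + Σ_{l=j+m+1}^{I−2} Γ(l)_{τ(l)}/(I−l) ). -/
open MeasureTheory

/-- `F(t) = ∫_t^T κ(u)(γ(u) − γ(t)) du`. -/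
noncomputable def Ffun (T : ℝ) (κ γ : ℝ → ℝ) (t : ℝ) : ℝ :=
  ∫ u in t..T, κ u * (γ u - γ t)

/-- `Γ(j)_t = A(j)·∫_{max(t,τ(j))}^T κ(u)(γ(u) − γ(τ(j))) du`. -/
noncomputable def GamP (T : ℝ) (κ γ : ℝ → ℝ) (I : ℕ) (a : ℕ → ℝ) (τ : ℕ → ℝ)
    (j : ℕ) (t : ℝ) : ℝ :=
  Acoef I a j * ∫ u in (max t (τ j))..T, κ u * (γ u - γ (τ j))

/-- `Y(j)_t = ((I−j+1)/(I−j))·Γ(j)_t + Σ_{k=j+1}^{I−2} Γ(k)_t/(I−k)` for `1 ≤ j ≤ I−2`,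
and `Y(j)_t = Γ(j)_t` for `j ∈ {I−1, I}`. -/
noncomputable def Yproc (T : ℝ) (κ γ : ℝ → ℝ) (I : ℕ) (a : ℕ → ℝ) (τ : ℕ → ℝ)
    (j : ℕ) (t : ℝ) : ℝ :=
  if j ≤ I - 2 then
    ((I : ℝ) - (j : ℝ) + 1) / ((I : ℝ) - (j : ℝ)) * GamP T κ γ I a τ j t
      + ∑ k ∈ Finset.Icc (j + 1) (I - 2), GamP T κ γ I a τ k t / ((I : ℝ) - (k : ℝ))
  else GamP T κ γ I a τ j t

/-! Between consecutive stop-trade times each `Γ(k)_s` is either `A(k) ∫_s^T κ (γ - γ(τ k))`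
(for `s ≥ τ(k)`) or constant, equal to `Γ(k)_{τ(k)}`. Writing `K(s) = ∫_s^T κ`, the quotient
`∫_s^T κ (γ - γ p) / K(s)` has derivative `κ(t) F(t) / K(t)²` whatever `p` is, because
`∫_t^T κ (γ - γ p) = F(t) + (γ t - γ p) K(t)` and the `p`-dependent terms cancel in the quotient
rule. The constant terms enter through `1 / K`, whose derivative is `κ(t) / K(t)²`. -/

open Set

section Quotient

variable {κ γ : ℝ → ℝ} {a T t : ℝ}

theorem hasDerivAt_integral_left_of_continuousOn {f : ℝ → ℝ} (hf : ContinuousOn f (Icc a T))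
    (ht : t ∈ Ioo a T) : HasDerivAt (fun s => ∫ u in s..T, f u) (-f t) t :=
  intervalIntegral.integral_hasDerivAt_left
    (hf.mono <| uIcc_subset_Icc (Ioo_subset_Icc_self ht)
      (right_mem_Icc.2 (ht.1.trans ht.2).le)).intervalIntegrable
    ((hf.mono Ioo_subset_Icc_self).stronglyMeasurableAtFilter isOpen_Ioo t ht)
    (hf.continuousAt (Icc_mem_nhds ht.1 ht.2))

theorem integral_mul_sub_eq_Ffun_add (hκ : ContinuousOn κ (uIcc t T))
    (hγ : ContinuousOn γ (uIcc t T)) (p : ℝ) :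
    ∫ u in t..T, κ u * (γ u - γ p) = Ffun T κ γ t + (γ t - γ p) * ∫ u in t..T, κ u := by
  have hE : IntervalIntegrable (fun u => κ u * (γ u - γ t)) volume t T :=
    (hκ.mul (hγ.sub continuousOn_const)).intervalIntegrable
  have hK : IntervalIntegrable (fun u => (γ t - γ p) * κ u) volume t T :=
    hκ.intervalIntegrable.const_mul _
  rw [Ffun, ← intervalIntegral.integral_const_mul, ← intervalIntegral.integral_add hE hK]
  exact intervalIntegral.integral_congr fun u _ => by ring

theorem hasDerivAt_integral_mul_sub_div_integral (hκ : ContinuousOn κ (Icc a T))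
    (hγ : ContinuousOn γ (Icc a T)) (ht : t ∈ Ioo a T) (hK : ∫ u in t..T, κ u ≠ 0) (p : ℝ) :
    HasDerivAt (fun s => (∫ u in s..T, κ u * (γ u - γ p)) / ∫ u in s..T, κ u)
      (κ t * Ffun T κ γ t / (∫ u in t..T, κ u) ^ 2) t := by
  have hsub : uIcc t T ⊆ Icc a T :=
    uIcc_subset_Icc (Ioo_subset_Icc_self ht) (right_mem_Icc.2 (ht.1.trans ht.2).le)
  have hE := hasDerivAt_integral_left_of_continuousOn (hκ.mul (hγ.sub continuousOn_const)) ht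
    (f := fun u => κ u * (γ u - γ p))
  refine (hE.div (hasDerivAt_integral_left_of_continuousOn hκ ht) hK).congr_deriv ?_
  rw [integral_mul_sub_eq_Ffun_add (hκ.mono hsub) (hγ.mono hsub)]
  ring

end Quotient

section StopTrade

variable {T : ℝ} {κ γ : ℝ → ℝ} {I : ℕ} {a : ℕ → ℝ} {τ : ℕ → ℝ}

theorem GamP_of_le {k : ℕ} {s : ℝ} (h : τ k ≤ s) :
    GamP T κ γ I a τ k s = Acoef I a k * ∫ u in s..T, κ u * (γ u - γ (τ k)) := by
  rw [GamP, max_eq_left h]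

theorem GamP_of_ge {k : ℕ} {s : ℝ} (h : s ≤ τ k) :
    GamP T κ γ I a τ k s = GamP T κ γ I a τ k (τ k) := by
  rw [GamP, GamP, max_eq_right h, max_self]

theorem Yproc_eq_of_le_of_ge {j n : ℕ} {s : ℝ} (hjn : j ≤ n) (hnI : n ≤ I - 2)
    (hlow : ∀ k ∈ Finset.Icc j n, τ k ≤ s)
    (hhigh : ∀ l ∈ Finset.Icc (n + 1) (I - 2), s ≤ τ l) :
    Yproc T κ γ I a τ j s =
      (I - j + 1) / (I - j) * (Acoef I a j * ∫ u in s..T, κ u * (γ u - γ (τ j)))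
        + ∑ k ∈ Finset.Icc (j + 1) n,
            Acoef I a k / (I - k) * (∫ u in s..T, κ u * (γ u - γ (τ k)))
        + ∑ l ∈ Finset.Icc (n + 1) (I - 2), GamP T κ γ I a τ l (τ l) / (I - l) := by
  rw [Yproc, if_pos (hjn.trans hnI), GamP_of_le (hlow j (by simp [hjn])), add_assoc,
    Finset.Icc_add_one_left_eq_Ioc, Finset.Icc_add_one_left_eq_Ioc, Finset.Icc_add_one_left_eq_Ioc,
    ← Finset.sum_Ioc_consecutive _ hjn hnI]
  congr 2
  · refine Finset.sum_congr rfl fun k hk => ?_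
    have hk' := Finset.mem_Ioc.mp hk
    rw [GamP_of_le (hlow k (Finset.mem_Icc.mpr ⟨hk'.1.le, hk'.2⟩))]
    ring
  · refine Finset.sum_congr rfl fun l hl => ?_
    rw [GamP_of_ge (hhigh l (by rwa [Finset.Icc_add_one_left_eq_Ioc]))]

end StopTrade

theorem stmt12_general (T : ℝ) (κ γ : ℝ → ℝ)
    (hκcont : ContinuousOn κ (Set.Icc 0 T))
    (hκpos : ∀ t ∈ Set.Icc (0 : ℝ) T, 0 < κ t)
    (hγcont : ContinuousOn γ (Set.Icc 0 T))
    (I : ℕ) (a : ℕ → ℝ) (τ : ℕ → ℝ)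
    (hτ0 : τ 0 = 0) (hτmono : ∀ j k : ℕ, j ≤ k → k ≤ I → τ j ≤ τ k)
    (hτT : τ (I - 1) < T)
    :
    ∀ j m : ℕ, 1 ≤ j → j ≤ I - 2 → m ≤ I - j - 2 →
      ∀ t : ℝ,
        ((m ≤ I - j - 3 ∧ t ∈ Set.Ioo (τ (j + m)) (τ (j + m + 1))) ∨
          (m = I - j - 2 ∧ t ∈ Set.Ioo (τ (I - 2)) T)) →
        HasDerivAt (fun s => Yproc T κ γ I a τ j s / ∫ u in s..T, κ u)
          (κ t / (∫ u in t..T, κ u) ^ 2 *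
            ((((I : ℝ) - (j : ℝ) + 1) / ((I : ℝ) - (j : ℝ)) * Acoef I a j
                + ∑ k ∈ Finset.Icc (j + 1) (j + m), Acoef I a k / ((I : ℝ) - (k : ℝ)))
                  * Ffun T κ γ t
              + ∑ l ∈ Finset.Icc (j + m + 1) (I - 2),
                  GamP T κ γ I a τ l (τ l) / ((I : ℝ) - (l : ℝ)))) t := by
  intro j m hj1 hjI hm t ht
  obtain ⟨b, htb, hbT, hb⟩ : ∃ b, t ∈ Ioo (τ (j + m)) b ∧ b ≤ T ∧
      ∀ l ∈ Finset.Icc (j + m + 1) (I - 2), b ≤ τ l := by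
    rcases ht with ⟨-, ht⟩ | ⟨hm2, ht⟩
    · exact ⟨_, ht, (hτmono _ (I - 1) (by omega) (by omega)).trans hτT.le,
        fun l hl => hτmono _ _ (Finset.mem_Icc.mp hl).1 (by grind)⟩
    · exact ⟨T, by rwa [show j + m = I - 2 by omega], le_rfl,
        fun l hl => by grind⟩
  have ht0 : t ∈ Ioo 0 T :=
    ⟨(hτ0 ▸ hτmono 0 (j + m) (by omega) (by omega)).trans_lt htb.1, htb.2.trans_le hbT⟩
  have hK : 0 < ∫ u in t..T, κ u :=
    intervalIntegral.intervalIntegral_pos_of_pos_on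
      ((hκcont.mono (Icc_subset_Icc ht0.1.le le_rfl)).intervalIntegrable_of_Icc ht0.2.le)
      (fun u hu => hκpos u ⟨ht0.1.trans hu.1 |>.le, hu.2.le⟩) ht0.2
  have hR := hasDerivAt_integral_mul_sub_div_integral hκcont hγcont ht0 hK.ne'
  set c : ℝ := ((I : ℝ) - j + 1) / ((I : ℝ) - j)
  set C : ℝ := ∑ l ∈ Finset.Icc (j + m + 1) (I - 2), GamP T κ γ I a τ l (τ l) / ((I : ℝ) - l)
  have hlocal : (fun s => Yproc T κ γ I a τ j s / ∫ u in s..T, κ u) =ᶠ[nhds t] fun s =>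
      c * Acoef I a j * ((∫ u in s..T, κ u * (γ u - γ (τ j))) / ∫ u in s..T, κ u)
        + ∑ k ∈ Finset.Icc (j + 1) (j + m), Acoef I a k / ((I : ℝ) - k) *
            ((∫ u in s..T, κ u * (γ u - γ (τ k))) / ∫ u in s..T, κ u)
        + C / ∫ u in s..T, κ u := by
    filter_upwards [isOpen_Ioo.mem_nhds htb] with s hs
    rw [Yproc_eq_of_le_of_ge (Nat.le_add_right j m) (by omega)
      (fun k hk => (hτmono k _ (Finset.mem_Icc.mp hk).2 (by omega)).trans hs.1.le)
      (fun l hl => hs.2.le.trans (hb l hl)), add_div, add_div, Finset.sum_div]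
    congr 2
    · ring
    · exact Finset.sum_congr rfl fun k _ => by ring
  have hsum := HasDerivAt.fun_sum (u := Finset.Icc (j + 1) (j + m)) fun k _ =>
    (hR (τ k)).const_mul (Acoef I a k / ((I : ℝ) - k))
  have hconst := (hasDerivAt_const t C).div
    (hasDerivAt_integral_left_of_continuousOn hκcont ht0) hK.ne'
  have hderiv := (((hR (τ j)).const_mul (c * Acoef I a j)).add hsum).add hconst
  refine (hderiv.congr_of_eventuallyEq hlocal).congr_deriv ?_
  rw [← Finset.sum_mul]
  ring

/-- for `1 ≤ j ≤ I−2`, `0 ≤ m ≤ I−j−2`, and `t` in the open interval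
`(τ(j+m), τ(j+m+1))` when `m ≤ I−j−3`, or in `(τ(I−2), T)` when `m = I−j−2`,
the map `s ↦ Y(j)_s / ∫_s^T κ(u) du` is differentiable at `t` with derivative
`(κ(t)/(∫_t^T κ)²)·((((I−j+1)/(I−j))·A(j) + Σ_{k=j+1}^{j+m} A(k)/(I−k))·F(t)
  + Σ_{l=j+m+1}^{I−2} Γ(l)_{τ(l)}/(I−l))`. -/
theorem stmt12 (T : ℝ) (κ γ : ℝ → ℝ) (hT : 0 < T)
    (hκcont : ContinuousOn κ (Set.Icc 0 T))
    (hκpos : ∀ t ∈ Set.Icc (0 : ℝ) T, 0 < κ t)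
    (hγcont : ContinuousOn γ (Set.Icc 0 T))
    (hγmono : StrictMonoOn γ (Set.Icc 0 T))
    (hγ0 : γ 0 = 0) (hγT : γ T = 1)
    (I : ℕ) (hI : 3 ≤ I) (a : ℕ → ℝ) (τ : ℕ → ℝ)
    (hτ0 : τ 0 = 0) (hτmono : ∀ j k : ℕ, j ≤ k → k ≤ I → τ j ≤ τ k)
    (hτlast : τ (I - 1) = τ I) (hτT : τ (I - 1) < T)
    :
    ∀ j m : ℕ, 1 ≤ j → j ≤ I - 2 → m ≤ I - j - 2 →
      ∀ t : ℝ,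
        ((m ≤ I - j - 3 ∧ t ∈ Set.Ioo (τ (j + m)) (τ (j + m + 1))) ∨
          (m = I - j - 2 ∧ t ∈ Set.Ioo (τ (I - 2)) T)) →
        HasDerivAt (fun s => Yproc T κ γ I a τ j s / ∫ u in s..T, κ u)
          (κ t / (∫ u in t..T, κ u) ^ 2 *
            ((((I : ℝ) - (j : ℝ) + 1) / ((I : ℝ) - (j : ℝ)) * Acoef I a j
                + ∑ k ∈ Finset.Icc (j + 1) (j + m), Acoef I a k / ((I : ℝ) - (k : ℝ)))
                  * Ffun T κ γ t
              + ∑ l ∈ Finset.Icc (j + m + 1) (I - 2),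
                  GamP T κ γ I a τ l (τ l) / ((I : ℝ) - (l : ℝ)))) t :=
  stmt12_general T κ γ hκcont hκpos hγcont I a τ hτ0 hτmono hτT
end
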